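/- arXiv:2308.01718 — 8 statements merged into one kernel-verified Lean document; each statement's English description precedes it below -/
import Mathlib

section
/- Let n ≥ 1, λ a partition of length at most 2n, and T ∈ SST_{2n}(λ). If T is not symplectic, then there exists a unique i ∈ [2,2n] such that T(i,1) < 2i−1 and T(k,1) ≥ 2k−1 for all k ∈ [1,i−1]; moreover, for this i one has T(i,1) = 2i−2 and T(i−1,1) = 2i−3. -/
/-- `part lam i` : the `i`-th part (1-indexed) of the partition `lam`,
with `lam_i = 0` for `i > ℓ(lam)`. -/
def part (lam : List ℕ) (i : ℕ) : ℕ := lam.getD (i - 1) 0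

/-- A partition: a weakly decreasing finite sequence of positive integers. -/
def IsPartition (lam : List ℕ) : Prop :=
  lam.Pairwise (· ≥ ·) ∧ ∀ x ∈ lam, 0 < x

/-- `(i, j)` is a cell of the Young diagram `D(lam)`. -/
def IsCell (lam : List ℕ) (i j : ℕ) : Prop :=
  1 ≤ i ∧ i ≤ lam.length ∧ 1 ≤ j ∧ j ≤ part lam i

/-- `T` is a semistandard Young tableau of shape `lam` with entries in `[1, m]`:
rows weakly increase from left to right, columns strictly increase from
top to bottom. -/
def IsSSYT (m : ℕ) (lam : List ℕ) (T : ℕ → ℕ → ℕ) : Prop :=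
  (∀ i j, IsCell lam i j → 1 ≤ T i j ∧ T i j ≤ m) ∧
  (∀ i j, IsCell lam i j → IsCell lam i (j + 1) → T i j ≤ T i (j + 1)) ∧
  (∀ i j, IsCell lam i j → IsCell lam (i + 1) j → T i j < T (i + 1) j)

/-!
Let `i` be the first row whose first entry violates `T(i,1) ≥ 2i - 1`. Since `T(1,1) ≥ 1`,
`i ≥ 2`, and the strict increase down the first column squeezes
`2i - 3 ≤ T(i-1,1) < T(i,1) < 2i - 1`, which forces both equalities. Uniqueness holds because
two first violations cannot precede one another.
-/

lemma isCell_first_column {lam : List ℕ} (hpos : ∀ x ∈ lam, 0 < x) {k : ℕ} (hk : 1 ≤ k)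
    (hkl : k ≤ lam.length) : IsCell lam k 1 := by
  have hlt : k - 1 < lam.length := by omega
  refine ⟨hk, hkl, le_rfl, ?_⟩
  rw [part, List.getD_eq_getElem _ _ hlt]
  exact hpos _ (List.getElem_mem hlt)

namespace IsSSYT

variable {m : ℕ} {lam : List ℕ} {T : ℕ → ℕ → ℕ}

lemma one_le_first_column (hT : IsSSYT m lam T) (hpos : ∀ x ∈ lam, 0 < x) {k : ℕ}
    (hk : 1 ≤ k) (hkl : k ≤ lam.length) : 1 ≤ T k 1 :=
  (hT.1 k 1 (isCell_first_column hpos hk hkl)).1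

lemma first_column_lt (hT : IsSSYT m lam T) (hpos : ∀ x ∈ lam, 0 < x) {k : ℕ}
    (hk : 2 ≤ k) (hkl : k ≤ lam.length) : T (k - 1) 1 < T k 1 := by
  obtain ⟨j, rfl⟩ : ∃ j, k = j + 1 := ⟨k - 1, by omega⟩
  exact hT.2.2 j 1 (isCell_first_column hpos (by omega) (by omega))
    (isCell_first_column hpos (by omega) hkl)

end IsSSYT

theorem stmt3_general (n : ℕ) (lam : List ℕ)
    (hlam : IsPartition lam) (hlen : lam.length ≤ 2 * n)
    (T : ℕ → ℕ → ℕ) (hT : IsSSYT (2 * n) lam T)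
    (hns : ¬ ∀ k, 1 ≤ k → k ≤ lam.length → 2 * k - 1 ≤ T k 1) :
    ∃ i,
      (2 ≤ i ∧ i ≤ 2 * n ∧ i ≤ lam.length ∧ T i 1 < 2 * i - 1 ∧
        ∀ k, 1 ≤ k → k ≤ i - 1 → 2 * k - 1 ≤ T k 1) ∧
      (∀ i', (2 ≤ i' ∧ i' ≤ 2 * n ∧ i' ≤ lam.length ∧ T i' 1 < 2 * i' - 1 ∧
        ∀ k, 1 ≤ k → k ≤ i' - 1 → 2 * k - 1 ≤ T k 1) → i' = i) ∧
      T i 1 = 2 * i - 2 ∧ T (i - 1) 1 = 2 * i - 3 := by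
  let Violates k := 1 ≤ k ∧ k ≤ lam.length ∧ T k 1 < 2 * k - 1
  have hex : ∃ k, Violates k := by
    simp only [not_forall, not_le] at hns
    obtain ⟨k, hk, hkl, hkT⟩ := hns
    exact ⟨k, hk, hkl, hkT⟩
  obtain ⟨i, ⟨hi, hil, hiT⟩, hmin⟩ : ∃ i, Violates i ∧ ∀ k < i, ¬ Violates k :=
    ⟨Nat.find hex, Nat.find_spec hex, fun _ => Nat.find_min hex⟩
  have hbefore : ∀ k, 1 ≤ k → k < i → 2 * k - 1 ≤ T k 1 := fun k hk hki => by
    simpa [Violates, hk, show k ≤ lam.length by omega] using hmin k hki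
  have hi2 : 2 ≤ i := by
    have := hT.one_le_first_column hlam.2 le_rfl (by omega : 1 ≤ lam.length)
    by_contra
    obtain rfl : i = 1 := by omega
    omega
  have hcol := hT.first_column_lt hlam.2 hi2 hil
  have hprev := hbefore (i - 1) (by omega) (by omega)
  refine ⟨i, ⟨hi2, by omega, hil, hiT, fun k hk hki => hbefore k hk (by omega)⟩,
    fun i' ⟨hi'2, _, hi'l, hi'T, hi'before⟩ => ?_, by omega, by omega⟩
  rcases lt_trichotomy i' i with h | h | h
  · exact absurd ⟨by omega, hi'l, hi'T⟩ (hmin i' h)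
  · exact h
  · have := hi'before i hi (by omega)
    omega

theorem stmt3 (n : ℕ) (hn : 1 ≤ n) (lam : List ℕ)
    (hlam : IsPartition lam) (hlen : lam.length ≤ 2 * n)
    (T : ℕ → ℕ → ℕ) (hT : IsSSYT (2 * n) lam T)
    (hns : ¬ ∀ k, 1 ≤ k → k ≤ lam.length → 2 * k - 1 ≤ T k 1) :
    ∃ i,
      (2 ≤ i ∧ i ≤ 2 * n ∧ i ≤ lam.length ∧ T i 1 < 2 * i - 1 ∧
        ∀ k, 1 ≤ k → k ≤ i - 1 → 2 * k - 1 ≤ T k 1) ∧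
      (∀ i', (2 ≤ i' ∧ i' ≤ 2 * n ∧ i' ≤ lam.length ∧ T i' 1 < 2 * i' - 1 ∧
        ∀ k, 1 ≤ k → k ≤ i' - 1 → 2 * k - 1 ≤ T k 1) → i' = i) ∧
      T i 1 = 2 * i - 2 ∧ T (i - 1) 1 = 2 * i - 3 :=
  stmt3_general n lam hlam hlen T hT hns
end

section
/- Let n ≥ 1, l ∈ [0,2n], and 𝐚 = (a_1,…,a_l) a strictly increasing sequence of integers in [1,2n]. Then: (1) if a_l ∈ Rem(𝐚), then a_l is even; (2) if a_l ∉ Rem(𝐚), then Rem(𝐚) = Rem(a_1,…,a_{l−1}); (3) if a_l ∈ Rem(𝐚), then Rem(a_1,…,a_{l−1}) = Rem(a_1,…,a_{l−2}); (4) Rem(a_1,…,a_k) ⊆ Rem(𝐚) for all k ∈ [0,l]. -/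
/-- `remAux` computes the set of removable entries of a strictly increasing
sequence, given as a list in *reversed* order (so the head is the last entry). -/
def remAux : List ℕ → Finset ℕ
  | [] => ∅
  | [_] => ∅
  | b :: a :: rest =>
    if Even b ∧ a + 1 = b ∧ b + (remAux rest).card + 1 < 2 * (rest.length + 2) then
      insert a (insert b (remAux rest))
    else remAux (a :: rest)

/-- `remSet 𝐚` : the set `Rem(𝐚)` of removable entries of the strictly
increasing sequence `𝐚 = (a_1, …, a_l)` (given in its natural order). -/
def remSet (l : List ℕ) : Finset ℕ := remAux l.reverse

/-!
Read the sequence backwards, so that the recursion defining `Rem` peels off the last entry.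
Removable entries belong to the sequence and the entries are distinct, so a removable last entry
was removed by the pairing rule, which makes it even. Its partner `a_{l-1} = a_l - 1` is then
odd, hence not removable in `(a_1, …, a_{l-1})`, which gives (3); the same observation shows
that `Rem` can only grow when one entry is appended, and (4) follows.
-/

lemma mem_of_mem_remAux {r : List ℕ} {x : ℕ} (h : x ∈ remAux r) : x ∈ r := by
  induction r using remAux.induct with
  | case1 | case2 => simp [remAux] at h
  | case3 b a rest hc _ =>
    rw [remAux, if_pos hc] at h
    simp only [Finset.mem_insert] at h
    rcases h with rfl | rfl | h <;> simp_all
  | case4 b a rest hc _ ih =>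
    rw [remAux, if_neg hc] at h
    exact List.mem_cons_of_mem b (ih h)

lemma even_of_mem_remAux_cons {b : ℕ} {t : List ℕ} (hb : b ∉ t) (h : b ∈ remAux (b :: t)) :
    Even b := by
  cases t with
  | nil => simp [remAux] at h
  | cons a rest =>
    rw [remAux] at h
    split_ifs at h with hc
    · exact hc.1
    · exact absurd (mem_of_mem_remAux h) hb

lemma remAux_cons_of_not_mem {b : ℕ} {t : List ℕ} (h : b ∉ remAux (b :: t)) :
    remAux (b :: t) = remAux t := by
  cases t with
  | nil => rfl
  | cons a rest =>
    rw [remAux, if_neg]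
    intro hc
    apply h
    rw [remAux, if_pos hc]
    exact Finset.mem_insert_of_mem (Finset.mem_insert_self b _)

lemma remAux_cons_of_not_even {a : ℕ} {t : List ℕ} (ha : a ∉ t) (hodd : ¬Even a) :
    remAux (a :: t) = remAux t :=
  remAux_cons_of_not_mem fun h => hodd (even_of_mem_remAux_cons ha h)

lemma remAux_subset_remAux_cons {b : ℕ} {t : List ℕ} (hnd : (b :: t).Nodup) :
    remAux t ⊆ remAux (b :: t) := by
  cases t with
  | nil => simp [remAux]
  | cons a rest =>
    rw [remAux]
    split_ifs with hc
    · have hodd : ¬Even a := by rw [← Nat.even_add_one, hc.2.1]; exact hc.1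
      rw [remAux_cons_of_not_even (List.nodup_cons.1 hnd.of_cons).1 hodd]
      exact (Finset.subset_insert _ _).trans (Finset.subset_insert _ _)
    · exact subset_rfl

lemma remAux_eq_remAux_tail_of_mem {b : ℕ} {t : List ℕ} (hnd : (b :: t).Nodup)
    (h : b ∈ remAux (b :: t)) : remAux t = remAux t.tail := by
  cases t with
  | nil => rfl
  | cons a rest =>
    rw [remAux] at h
    split_ifs at h with hc
    · have hodd : ¬Even a := by rw [← Nat.even_add_one, hc.2.1]; exact hc.1
      exact remAux_cons_of_not_even (List.nodup_cons.1 hnd.of_cons).1 hodd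
    · exact absurd (mem_of_mem_remAux h) (List.nodup_cons.1 hnd).1

lemma remAux_drop_subset {r : List ℕ} (hnd : r.Nodup) (m : ℕ) :
    remAux (r.drop m) ⊆ remAux r := by
  induction r generalizing m with
  | nil => simp
  | cons b t ih =>
    cases m with
    | zero => exact subset_rfl
    | succ m => exact (ih hnd.of_cons m).trans (remAux_subset_remAux_cons hnd)

lemma List.reverse_eq_getLast_cons {α : Type*} {l : List α} (h : l ≠ []) :
    l.reverse = l.getLast h :: l.dropLast.reverse := by
  conv_lhs => rw [← List.dropLast_append_getLast h]
  exact List.reverse_concat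

theorem stmt4_general (a : List ℕ) (hinc : a.Chain' (· < ·)) :
    (∀ h : a ≠ [], a.getLast h ∈ remSet a → Even (a.getLast h)) ∧
    (∀ h : a ≠ [], a.getLast h ∉ remSet a → remSet a = remSet a.dropLast) ∧
    (∀ h : a ≠ [], a.getLast h ∈ remSet a →
      remSet a.dropLast = remSet a.dropLast.dropLast) ∧
    (∀ k ≤ a.length, remSet (a.take k) ⊆ remSet a) := by
  have hnd : a.reverse.Nodup := List.nodup_reverse.2 hinc.pairwise.nodup
  have hnd_cons (h : a ≠ []) : (a.getLast h :: a.dropLast.reverse).Nodup :=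
    List.reverse_eq_getLast_cons h ▸ hnd
  refine ⟨fun h hm => ?_, fun h hm => ?_, fun h hm => ?_, fun k _ => ?_⟩
  · rw [remSet, List.reverse_eq_getLast_cons h] at hm
    exact even_of_mem_remAux_cons (List.nodup_cons.1 (hnd_cons h)).1 hm
  · rw [remSet, List.reverse_eq_getLast_cons h] at hm ⊢
    exact remAux_cons_of_not_mem hm
  · rw [remSet, List.reverse_eq_getLast_cons h] at hm
    rw [remSet, remSet, ← List.tail_reverse (l := a.dropLast)]
    exact remAux_eq_remAux_tail_of_mem (hnd_cons h) hm
  · rw [remSet, remSet, List.reverse_take]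
    exact remAux_drop_subset hnd _

theorem stmt4 (n : ℕ) (hn : 1 ≤ n) (a : List ℕ)
    (hinc : a.Chain' (· < ·)) (hbd : ∀ x ∈ a, 1 ≤ x ∧ x ≤ 2 * n)
    (hlen : a.length ≤ 2 * n) :
    (∀ h : a ≠ [], a.getLast h ∈ remSet a → Even (a.getLast h)) ∧
    (∀ h : a ≠ [], a.getLast h ∉ remSet a → remSet a = remSet a.dropLast) ∧
    (∀ h : a ≠ [], a.getLast h ∈ remSet a →
      remSet a.dropLast = remSet a.dropLast.dropLast) ∧
    (∀ k ≤ a.length, remSet (a.take k) ⊆ remSet a) :=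
  stmt4_general a hinc
end

section
/- Let n ≥ 1, l ∈ [0,2n], and 𝐚 = (a_1,…,a_l) a strictly increasing sequence of integers in [1,2n]. For every a ∈ [1,2n], one has a ∈ Rem(𝐚) if and only if s(a) ∈ Rem(𝐚), where s(a) := a+1 if a is odd and s(a) := a−1 if a is even. Consequently, |Rem(𝐚)| is even. -/
/-- `redSeq 𝐚` : the reduction `red(𝐚)`, i.e. `𝐚` with the removable entries
removed. -/
def redSeq (l : List ℕ) : List ℕ := l.filter (fun x => decide (x ∉ remSet l))

/-- `swp a` : the involution `s` exchanging `2k-1` and `2k`. -/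
def swp (a : ℕ) : ℕ := if Even a then a - 1 else a + 1

lemma swp_swp (x : ℕ) (hx : x ≠ 0) : swp (swp x) = x := by
  rcases Nat.even_or_odd x with h | h
  · have : ¬ Even (x - 1) := by
      rcases h with ⟨k, rfl⟩
      rcases Nat.eq_zero_or_pos k with rfl | hk
      · simp at hx
      · intro ⟨m, hm⟩; omega
    simp [swp, h, this]
    omega
  · have h' : ¬ Even x := Nat.not_even_iff_odd.mpr h
    have : Even (x + 1) := Odd.add_one h
    simp [swp, h', this]
  
lemma remAux_pos (L : List ℕ) : ∀ x ∈ remAux L, 0 < x := by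
  induction L using remAux.induct with
  | case1 => simp [remAux]
  | case2 => simp [remAux]
  | case3 b a rest hc ih =>
    intro x hx
    rw [remAux, if_pos hc] at hx
    simp only [Finset.mem_insert] at hx
    obtain ⟨hb, hab, _⟩ := hc
    rcases hx with rfl | rfl | hx
    · rcases Nat.eq_zero_or_pos x with rfl | h
      · simp at hab; subst hab; exact absurd hb (by decide)
      · exact h
    · omega
    · exact ih x hx
  | case4 b a rest hc ih1 ih2 =>
    intro x hx
    rw [remAux, if_neg hc] at hx
    exact ih2 x hx

lemma remAux_mem (L : List ℕ) : ∀ x ∈ remAux L, x ∈ L := by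
  induction L using remAux.induct with
  | case1 => simp [remAux]
  | case2 => simp [remAux]
  | case3 b a rest hc ih =>
    intro x hx
    rw [remAux, if_pos hc] at hx
    simp only [Finset.mem_insert] at hx
    rcases hx with rfl | rfl | hx
    · simp
    · simp
    · simp [ih x hx]
  | case4 b a rest hc ih1 ih2 =>
    intro x hx
    rw [remAux, if_neg hc] at hx
    have := ih2 x hx
    simp at this ⊢
    tauto

lemma remAux_key (L : List ℕ) (h : L.Pairwise (· > ·)) :
    (∀ x, x ∈ remAux L → swp x ∈ remAux L) ∧ Even (remAux L).card := by
  induction L using remAux.induct with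
  | case1 => simp [remAux]
  | case2 => simp [remAux]
  | case3 b a rest hc ih =>
    have hpr : rest.Pairwise (· > ·) := (List.pairwise_cons.mp ((List.pairwise_cons.mp h).2)).2
    have hagt : ∀ y ∈ rest, a > y := (List.pairwise_cons.mp ((List.pairwise_cons.mp h).2)).1
    have hba : b > a := (List.pairwise_cons.mp h).1 a (by simp)
    obtain ⟨ihmem, ihcard⟩ := ih hpr
    obtain ⟨hb, hab, hlt⟩ := hc
    have haodd : ¬ Even a := by
      intro ha; rw [← hab] at hb; exact (Nat.even_add_one.mp hb) ha
    have hswpa : swp a = b := by simp [swp, haodd]; omega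
    have hswpb : swp b = a := by simp [swp, hb]; omega
    have haS : a ∉ remAux rest := fun hm => lt_irrefl a (hagt a (remAux_mem rest a hm))
    have hbS : b ∉ remAux rest := fun hm => lt_irrefl b (lt_trans (hagt b (remAux_mem rest b hm)) hba)
    constructor
    · intro x hx
      rw [remAux, if_pos ⟨hb, hab, hlt⟩] at hx ⊢
      simp only [Finset.mem_insert] at hx ⊢
      rcases hx with rfl | rfl | hx
      · rw [hswpa]; tauto
      · rw [hswpb]; tauto
      · exact Or.inr (Or.inr (ihmem x hx))
    · rw [remAux, if_pos ⟨hb, hab, hlt⟩]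
      rw [Finset.card_insert_of_notMem (by simp [haS]; omega),
        Finset.card_insert_of_notMem hbS]
      obtain ⟨k, hk⟩ := ihcard
      exact ⟨k + 1, by omega⟩
  | case4 b a rest hc ih1 ih2 =>
    rw [remAux, if_neg hc]
    exact ih2 (List.pairwise_cons.mp h).2

theorem stmt6 (n : ℕ) (hn : 1 ≤ n) (a : List ℕ)
    (hinc : a.Chain' (· < ·)) (hbd : ∀ x ∈ a, 1 ≤ x ∧ x ≤ 2 * n)
    (hlen : a.length ≤ 2 * n) :
    (∀ x, 1 ≤ x → x ≤ 2 * n → (x ∈ remSet a ↔ swp x ∈ remSet a)) ∧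
    Even (remSet a).card := by
  have hpw : a.reverse.Pairwise (· > ·) := by
    have h1 : a.Pairwise (· < ·) := List.isChain_iff_pairwise.mp hinc
    exact List.pairwise_reverse.mpr h1
  obtain ⟨hmem, hcard⟩ := remAux_key a.reverse hpw
  refine ⟨fun x hx1 hx2 => ⟨fun h => hmem x h, fun h => ?_⟩, hcard⟩
  have := hmem (swp x) h
  rwa [swp_swp x (by omega)] at this
end

section
/- Let n ≥ 1, l ∈ [0,2n], and 𝐚 = (a_1,…,a_l) a strictly increasing sequence of integers in [1,2n]. Suppose a_l is even and there exists r ∈ [0,l−1] such that a_{l−r} = a_l − r and a_{l−r} ∈ Rem(𝐚). Then a_{l−t} ∈ Rem(𝐚) for all t ∈ [0,r]. Moreover, if r is odd, then Rem(𝐚) = Rem(a_1,…,a_{l−r−1}) ⊔ [a_l − r, a_l] (disjoint union with the integer interval [a_l − r, a_l]). -/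
namespace List

theorem add_length_le_getLast_of_isChain_lt {x : ℕ} {L : List ℕ} (hL : (x :: L).IsChain (· < ·)) :
    x + L.length ≤ (x :: L).getLast (cons_ne_nil x L) := by
  induction L generalizing x with
  | nil => simp
  | cons y L ih =>
    rw [isChain_cons_cons] at hL
    have := ih hL.2
    simp only [getLast_cons_cons, length_cons] at this ⊢
    omega

theorem eq_range'_of_isChain_lt_of_getLast_eq {x : ℕ} {L : List ℕ} (hL : (x :: L).IsChain (· < ·))
    (hlast : (x :: L).getLast (cons_ne_nil x L) = x + L.length) :
    x :: L = range' x (L.length + 1) := by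
  induction L generalizing x with
  | nil => rfl
  | cons y L ih =>
    rw [isChain_cons_cons] at hL
    have hy := add_length_le_getLast_of_isChain_lt hL.2
    simp only [getLast_cons_cons, length_cons] at hlast hy
    obtain rfl : y = x + 1 := by omega
    rw [ih hL.2 (by omega)]
    simp [range'_succ]

theorem drop_eq_range'_of_isChain_lt {L : List ℕ} (hL : L.IsChain (· < ·)) {k : ℕ}
    (hk : k < L.length) (hne : L ≠ []) (hlast : L.getLast hne = L[k] + (L.length - k - 1)) :
    L.drop k = range' L[k] (L.length - k) := by
  have hL' := hL.drop k
  rw [drop_eq_getElem_cons hk] at hL' ⊢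
  refine (eq_range'_of_isChain_lt_of_getLast_eq hL' ?_).trans (by simp; omega)
  have hdrop : (L[k] :: L.drop (k + 1)).getLast (cons_ne_nil _ _) = L.getLast hne := by
    simp only [← drop_eq_getElem_cons hk, getLast_drop]
  rw [hdrop, hlast, length_drop]
  omega

theorem getD_mem_drop {α : Type*} {L : List α} {k i : ℕ} (hki : k ≤ i) (hi : i < L.length) (d : α) :
    L.getD i d ∈ L.drop k := by
  rw [getD_eq_getElem _ _ hi]
  exact mem_iff_getElem.mpr ⟨i - k, by simp; omega, by simp [getElem_drop]; congr; omega⟩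

end List

def PairRemovable (b a : ℕ) (rest : List ℕ) : Prop :=
  Even b ∧ a + 1 = b ∧ b + (remAux rest).card + 1 < 2 * (rest.length + 2)

section remAux

variable {a b c x : ℕ} {rest M : List ℕ}

lemma remAux_cons_cons_of_pairRemovable (h : PairRemovable b a rest) :
    remAux (b :: a :: rest) = insert a (insert b (remAux rest)) := by
  rw [remAux]; exact if_pos h

lemma remAux_cons_cons_of_not_pairRemovable (h : ¬PairRemovable b a rest) :
    remAux (b :: a :: rest) = remAux (a :: rest) := by
  rw [remAux]; exact if_neg h

lemma remAux_cons_of_not_even_s7 (hx : ¬Even x) (L : List ℕ) : remAux (x :: L) = remAux L := by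
  cases L with
  | nil => rfl
  | cons y L => exact remAux_cons_cons_of_not_pairRemovable fun h => hx h.1

lemma remAux_subset_toFinset (L : List ℕ) : remAux L ⊆ L.toFinset := by
  induction L using remAux.induct with
  | case1 | case2 => simp [remAux]
  | case3 b a rest h ih =>
    rw [remAux_cons_cons_of_pairRemovable h]
    simpa [Finset.insert_subset_iff] using ih.trans fun y hy => by simp_all
  | case4 b a rest h _ ih =>
    rw [remAux_cons_cons_of_not_pairRemovable h]
    exact ih.trans fun y hy => by simp_all

lemma lt_of_mem_remAux (hM : ∀ y ∈ M, y < c) (hx : x ∈ remAux M) : x < c :=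
  hM x (List.mem_toFinset.mp (remAux_subset_toFinset M hx))

lemma disjoint_remAux_Icc (hM : ∀ y ∈ M, y < c) (d : ℕ) : Disjoint (remAux M) (Finset.Icc c d) :=
  Finset.disjoint_left.mpr fun x hx hx' => by
    have := lt_of_mem_remAux hM hx
    simp only [Finset.mem_Icc] at hx'
    omega

lemma pairRemovable_of_mem_remAux (hx : x ∈ remAux (b :: a :: rest)) (hx' : x ∉ remAux (a :: rest)) :
    PairRemovable b a rest := by
  by_contra h
  rw [remAux_cons_cons_of_not_pairRemovable h] at hx
  exact hx' hx

lemma mem_remAux_of_mem_remAux_cons_cons (hx : x ∈ remAux (b :: a :: rest)) (ha : ¬Even a)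
    (hxa : x ≠ a) (hxb : x ≠ b) : x ∈ remAux rest := by
  by_cases h : PairRemovable b a rest
  · rw [remAux_cons_cons_of_pairRemovable h] at hx
    simpa [hxa, hxb] using hx
  · rwa [remAux_cons_cons_of_not_pairRemovable h, remAux_cons_of_not_even_s7 ha] at hx

lemma pairRemovable_add_two (h : PairRemovable b a rest) :
    PairRemovable (b + 2) (b + 1) (b :: a :: rest) := by
  have hcard : (remAux (b :: a :: rest)).card ≤ (remAux rest).card + 2 := by
    rw [remAux_cons_cons_of_pairRemovable h]
    exact (Finset.card_insert_le _ _).trans (Nat.succ_le_succ (Finset.card_insert_le _ _))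
  obtain ⟨hb, -, hroom⟩ := h
  refine ⟨hb.add (by decide), rfl, ?_⟩
  simp only [List.length_cons]
  omega

end remAux

def topRun (c r : ℕ) (M : List ℕ) : List ℕ := (List.range' c (r + 1)).reverse ++ M

section topRun

variable {c : ℕ} {M : List ℕ}

lemma topRun_zero : topRun c 0 M = c :: M := rfl

lemma topRun_one : topRun c 1 M = (c + 1) :: c :: M := by
  simp [topRun, List.range'_concat]

lemma topRun_add_two (r : ℕ) :
    topRun c (r + 2) M = (c + r + 2) :: (c + r + 1) :: topRun c r M := by
  simp [topRun, List.range'_concat, Nat.add_assoc]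

theorem remAux_topRun (hM : ∀ x ∈ M, x < c) (r : ℕ) (heven : Even (c + r))
    (hc : c ∈ remAux (topRun c r M)) :
    PairRemovable (c + r + 2) (c + r + 1) (topRun c r M) ∧
      Finset.Icc c (c + r) ⊆ remAux (topRun c r M) ∧
      (Odd r → remAux (topRun c r M) = remAux M ∪ Finset.Icc c (c + r)) := by
  induction r using Nat.twoStepInduction with
  | zero =>
    rw [topRun_zero] at hc ⊢
    cases M with
    | nil => simp [remAux] at hc
    | cons d M =>
      have hP := pairRemovable_of_mem_remAux hc fun h => (lt_of_mem_remAux hM h).false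
      exact ⟨pairRemovable_add_two hP, by simpa using hc, by simp⟩
  | one =>
    rw [topRun_one] at hc ⊢
    have hP := pairRemovable_of_mem_remAux hc fun h => by
      rw [remAux_cons_of_not_even_s7 (by simpa [Nat.even_add_one] using heven)] at h
      exact (lt_of_mem_remAux hM h).false
    refine ⟨pairRemovable_add_two hP, ?_, fun _ => ?_⟩ <;>
      rw [remAux_cons_cons_of_pairRemovable hP]
    · intro x hx
      simp only [Finset.mem_Icc] at hx
      obtain rfl | rfl : x = c ∨ x = c + 1 := by omega
      all_goals simp
    · ext x
      simp only [Finset.mem_insert, Finset.mem_union, Finset.mem_Icc]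
      grind
  | more r ih _ =>
    rw [topRun_add_two] at hc ⊢
    have heven' : Even (c + r) := by simpa [← Nat.add_assoc, Nat.even_add] using heven
    have hc' := mem_remAux_of_mem_remAux_cons_cons hc
      (by simpa [Nat.even_add_one] using heven') (by omega) (by omega)
    obtain ⟨hP, hsub, hodd⟩ := ih heven' hc'
    refine ⟨pairRemovable_add_two hP, ?_, fun hr => ?_⟩ <;>
      rw [remAux_cons_cons_of_pairRemovable hP]
    · intro x hx
      simp only [Finset.mem_Icc] at hx
      by_cases hxr : x ≤ c + r
      · exact Finset.mem_insert_of_mem (Finset.mem_insert_of_mem (hsub (by simp [hx.1, hxr])))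
      · obtain rfl | rfl : x = c + r + 1 ∨ x = c + r + 2 := by omega
        all_goals simp
    · rw [hodd (by simpa [Nat.odd_add] using hr)]
      ext x
      simp only [Finset.mem_insert, Finset.mem_union, Finset.mem_Icc]
      grind

end topRun

theorem stmt7_general (a : List ℕ)
    (hinc : a.Chain' (· < ·)) (h : a ≠ [])
    (heven : Even (a.getLast h)) (r : ℕ) (hr : r ≤ a.length - 1)
    (hval : a.getD (a.length - r - 1) 0 + r = a.getLast h)
    (hmem : a.getD (a.length - r - 1) 0 ∈ remSet a) :
    (∀ t ≤ r, a.getD (a.length - t - 1) 0 ∈ remSet a) ∧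
    (Odd r →
      remSet a =
        remSet (a.take (a.length - r - 1)) ∪
          Finset.Icc (a.getLast h - r) (a.getLast h) ∧
      Disjoint (remSet (a.take (a.length - r - 1)))
        (Finset.Icc (a.getLast h - r) (a.getLast h))) := by
  have hlen : 0 < a.length := List.length_pos_iff.mpr h
  set k := a.length - r - 1
  set c := a.getD k 0
  have hk : k < a.length := by omega
  have hc : c = a[k] := List.getD_eq_getElem _ _ hk
  have hrun : a.drop k = List.range' c (r + 1) := by
    rw [hc, show r + 1 = a.length - k by omega]
    exact List.drop_eq_range'_of_isChain_lt hinc hk h (by rw [← hc, ← hval]; omega)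
  have hsplit : a.reverse = topRun c r (a.take k).reverse := by
    rw [topRun, ← List.reverse_append, ← hrun, List.take_append_drop]
  have hprefix_lt : ∀ x ∈ (a.take k).reverse, x < c := by
    have := List.isChain_iff_pairwise.mp hinc
    rw [← List.take_append_drop k a, List.pairwise_append] at this
    exact fun x hx => this.2.2 x (List.mem_reverse.mp hx) c (by simp [hrun])
  have hlast : a.getLast h = c + r := hval.symm
  rw [remSet, hsplit] at hmem
  obtain ⟨-, hsub, hodd⟩ := remAux_topRun hprefix_lt r (hlast ▸ heven) hmem
  rw [remSet, hsplit, remSet, hlast, Nat.add_sub_cancel]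
  refine ⟨fun t ht => hsub ?_, fun hodd' => ⟨hodd hodd', disjoint_remAux_Icc hprefix_lt _⟩⟩
  have := List.getD_mem_drop (L := a) (k := k) (i := a.length - t - 1) (by omega) (by omega) 0
  rw [hrun, List.mem_range'_1] at this
  simp only [Finset.mem_Icc]
  omega

theorem stmt7 (n : ℕ) (hn : 1 ≤ n) (a : List ℕ)
    (hinc : a.Chain' (· < ·)) (hbd : ∀ x ∈ a, 1 ≤ x ∧ x ≤ 2 * n)
    (hlen : a.length ≤ 2 * n) (h : a ≠ [])
    (heven : Even (a.getLast h)) (r : ℕ) (hr : r ≤ a.length - 1)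
    (hval : a.getD (a.length - r - 1) 0 + r = a.getLast h)
    (hmem : a.getD (a.length - r - 1) 0 ∈ remSet a) :
    (∀ t ≤ r, a.getD (a.length - t - 1) 0 ∈ remSet a) ∧
    (Odd r →
      remSet a =
        remSet (a.take (a.length - r - 1)) ∪
          Finset.Icc (a.getLast h - r) (a.getLast h) ∧
      Disjoint (remSet (a.take (a.length - r - 1)))
        (Finset.Icc (a.getLast h - r) (a.getLast h))) :=
  stmt7_general a hinc h heven r hr hval hmem
end

section
/- Let n ≥ 1, l ∈ [0,2n], 𝐚 = (a_1,…,a_l) a strictly increasing sequence of integers in [1,2n], and i ∈ [1,l] such that a_j ∉ Rem(𝐚) for all j ∈ [i,l]. Then Rem(𝐚) = Rem(a_1,…,a_{i−1}), and consequently red(𝐚) is the concatenation of red(a_1,…,a_{i−1}) with (a_i,…,a_l). -/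
lemma remAux_append_of_forall_not_mem {s t : List ℕ} (h : ∀ x ∈ s, x ∉ remAux (s ++ t)) :
    remAux (s ++ t) = remAux t := by
  induction s with
  | nil => rfl
  | cons b s ih =>
    have hb : remAux (b :: (s ++ t)) = remAux (s ++ t) :=
      remAux_cons_of_not_mem (h b List.mem_cons_self)
    rw [List.cons_append, hb]
    exact ih fun x hx => by
      simpa only [List.cons_append, hb] using h x (List.mem_cons_of_mem b hx)

lemma remSet_append_of_forall_not_mem {s t : List ℕ} (h : ∀ x ∈ t, x ∉ remSet (s ++ t)) :
    remSet (s ++ t) = remSet s := by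
  unfold remSet at h ⊢
  rw [List.reverse_append] at h ⊢
  exact remAux_append_of_forall_not_mem fun x hx => h x (List.mem_reverse.mp hx)

lemma redSeq_append_of_forall_not_mem {s t : List ℕ} (h : ∀ x ∈ t, x ∉ remSet (s ++ t)) :
    redSeq (s ++ t) = redSeq s ++ t := by
  have hrem := remSet_append_of_forall_not_mem h
  have hkeep : t.filter (fun x => decide (x ∉ remSet s)) = t :=
    List.filter_eq_self.mpr fun x hx => by simpa [← hrem] using h x hx
  rw [redSeq, hrem, List.filter_append, hkeep, redSeq]

theorem stmt12_general (a : List ℕ) (i : ℕ)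
    (hni : ∀ j, i ≤ j → j ≤ a.length → a.getD (j - 1) 0 ∉ remSet a) :
    remSet a = remSet (a.take (i - 1)) ∧
    redSeq a = redSeq (a.take (i - 1)) ++ a.drop (i - 1) := by
  have hdrop : ∀ x ∈ a.drop (i - 1), x ∉ remSet (a.take (i - 1) ++ a.drop (i - 1)) := by
    intro x hx
    obtain ⟨k, hk, rfl⟩ := List.getElem_of_mem hx
    rw [List.length_drop] at hk
    have hk_not_mem := hni (i - 1 + k + 1) (by omega) (by omega)
    simpa [List.getElem?_eq_getElem (show i - 1 + k < a.length by omega)] using hk_not_mem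
  exact ⟨by simpa using remSet_append_of_forall_not_mem hdrop,
    by simpa using redSeq_append_of_forall_not_mem hdrop⟩

theorem stmt12 (n : ℕ) (hn : 1 ≤ n) (a : List ℕ)
    (hinc : a.Chain' (· < ·)) (hbd : ∀ x ∈ a, 1 ≤ x ∧ x ≤ 2 * n)
    (hlen : a.length ≤ 2 * n) (i : ℕ) (hi1 : 1 ≤ i) (hil : i ≤ a.length)
    (hni : ∀ j, i ≤ j → j ≤ a.length → a.getD (j - 1) 0 ∉ remSet a) :
    remSet a = remSet (a.take (i - 1)) ∧
    redSeq a = redSeq (a.take (i - 1)) ++ a.drop (i - 1) :=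
  stmt12_general a i hni
end

section
/- Let n ≥ 1, l ∈ [0,2n], and 𝐚 = (a_1,…,a_l) a strictly increasing sequence of integers in [1,2n]. Write red(𝐚) = (a_{i_1}, a_{i_2}, …, a_{i_k}) with 1 ≤ i_1 < i_2 < ⋯ < i_k ≤ l. Then for each t ∈ [1,k], one has i_t = t + |Rem(a_1, a_2, …, a_{i_t − 1})|. -/
/-!
If `a_i` survives in `red(𝐚)`, the recursion defining `Rem(𝐚)`, which consumes `𝐚` from its
end, never pairs `a_i` with a neighbour; so it reaches the prefix `(a_1, …, a_i)`, passes `a_i`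
through the "otherwise" branch and continues on `(a_1, …, a_{i-1})`, having removed only entries
larger than `a_i`. Hence the removable entries of `𝐚` below `a_i` are exactly
`Rem(a_1, …, a_{i-1})`, and `a_i` sits at position `i - |Rem(a_1, …, a_{i-1})|` of `red(𝐚)`.
-/

theorem List.Nodup.countP_mem_eq_card {α : Type*} [DecidableEq α] {l : List α} (hl : l.Nodup)
    {s : Finset α} (hs : s ⊆ l.toFinset) : l.countP (· ∈ s) = s.card := by
  rw [List.countP_eq_length_filter, ← List.toFinset_card_of_nodup (hl.filter _),
    List.toFinset_filter]
  simp only [decide_eq_true_eq, Finset.filter_mem_eq_inter, Finset.inter_eq_right.mpr hs]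

theorem List.Nodup.eq_length_filter_take {α : Type*} {l : List α} (hl : l.Nodup) (p : α → Bool)
    {i s : ℕ} (hi : i < l.length) (hs : s < (l.filter p).length) (h : (l.filter p)[s] = l[i]) :
    s = ((l.take i).filter p).length := by
  have hp : p l[i] := h ▸ List.getElem_filter hs
  have hfilter : l.filter p = (l.take i).filter p ++ l[i] :: (l.drop (i + 1)).filter p := by
    conv_lhs => rw [← List.take_append_drop i l, ← List.getElem_cons_drop hi]
    rw [List.filter_append, List.filter_cons_of_pos hp]
  have hm : ((l.take i).filter p).length < (l.filter p).length := by simp [hfilter]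
  refine ((hl.filter p).getElem_inj_iff (hi := hs) (hj := hm)).mp ?_
  rw [h]
  simp only [hfilter, List.getElem_append_right (le_refl _), Nat.sub_self, List.getElem_cons_zero]

theorem mem_of_mem_remAux_s13 {L : List ℕ} {y : ℕ} (hy : y ∈ remAux L) : y ∈ L := by
  induction L using remAux.induct with
  | case1 => simp [remAux] at hy
  | case2 => simp [remAux] at hy
  | case3 b c rest hc ih =>
    rw [remAux, if_pos hc] at hy
    simp only [Finset.mem_insert] at hy
    rcases hy with rfl | rfl | hy
    · exact .tail _ (.head _)
    · exact .head _
    · exact .tail _ (.tail _ (ih hy))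
  | case4 b c rest hc _ ih =>
    rw [remAux, if_neg hc] at hy
    exact List.mem_cons_of_mem b (ih hy)

theorem remAux_filter_lt_of_not_mem {L : List ℕ} (hL : L.Pairwise (· > ·)) {P S : List ℕ}
    {x : ℕ} (hsplit : L = P ++ x :: S) (hx : x ∉ remAux L) :
    (remAux L).filter (· < x) = remAux S := by
  induction L using remAux.induct generalizing P with
  | case1 => simp at hsplit
  | case2 y =>
    obtain ⟨rfl, rfl⟩ : x = y ∧ S = [] := by
      rcases P with _ | ⟨p, _ | ⟨q, P⟩⟩ <;> simp_all
    simp [remAux]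
  | case3 b c rest hc ih =>
    rw [remAux, if_pos hc] at hx ⊢
    simp only [Finset.mem_insert, not_or] at hx
    obtain ⟨hxc, hxb, hx⟩ := hx
    obtain ⟨P, rfl, hrest⟩ : ∃ P', P = b :: c :: P' ∧ rest = P' ++ x :: S := by
      rcases P with _ | ⟨p, _ | ⟨q, P⟩⟩
      · exact absurd (List.cons_eq_cons.mp hsplit).1.symm hxb
      · exact absurd (List.cons_eq_cons.mp (List.cons_eq_cons.mp hsplit).2).1.symm hxc
      · simp only [List.cons_append, List.cons.injEq] at hsplit
        exact ⟨P, by rw [hsplit.1, hsplit.2.1], hsplit.2.2⟩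
    have hxrest : x ∈ rest := by simp [hrest]
    simp only [List.pairwise_cons, List.mem_cons] at hL
    rw [Finset.filter_insert, if_neg (by have := hL.2.1 x hxrest; omega),
      Finset.filter_insert, if_neg (by have := hL.1 x (.inr hxrest); omega)]
    exact ih hL.2.2 hrest hx
  | case4 b c rest hc _ ih =>
    rw [remAux, if_neg hc] at hx ⊢
    rcases P with _ | ⟨p, P⟩
    · obtain ⟨rfl, rfl⟩ := List.cons_eq_cons.mp hsplit
      exact Finset.filter_true_of_mem fun y hy =>
        (List.pairwise_cons.mp hL).1 y (mem_of_mem_remAux_s13 hy)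
    · obtain ⟨rfl, hrest⟩ := List.cons_eq_cons.mp hsplit
      exact ih (List.pairwise_cons.mp hL).2 hrest hx

theorem remSet_filter_lt_of_not_mem {a : List ℕ} (ha : a.Pairwise (· < ·)) {i : ℕ}
    (hi : i < a.length) (hkept : a[i] ∉ remSet a) :
    (remSet a).filter (· < a[i]) = remSet (a.take i) := by
  have hsplit : a.reverse = (a.drop (i + 1)).reverse ++ a[i] :: (a.take i).reverse := by
    conv_lhs => rw [← List.take_append_drop i a, ← List.getElem_cons_drop hi]
    simp
  exact remAux_filter_lt_of_not_mem (List.pairwise_reverse.mpr ha) hsplit hkept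

theorem countP_take_mem_remSet {a : List ℕ} (ha : a.Pairwise (· < ·)) {i : ℕ}
    (hi : i < a.length) (hkept : a[i] ∉ remSet a) :
    (a.take i).countP (· ∈ remSet a) = (remSet (a.take i)).card := by
  have hlt : ∀ x ∈ a.take i, x < a[i] := by
    have hpw := ha
    rw [← List.take_append_drop i a, ← List.getElem_cons_drop hi, List.pairwise_append] at hpw
    exact fun x hx => hpw.2.2 x hx a[i] List.mem_cons_self
  have hsub : remSet (a.take i) ⊆ (a.take i).toFinset := fun x hx =>
    List.mem_toFinset.mpr (List.mem_reverse.mp (mem_of_mem_remAux_s13 hx))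
  rw [← (ha.sublist (List.take_sublist i a)).nodup.countP_mem_eq_card hsub,
    ← remSet_filter_lt_of_not_mem ha hi hkept]
  refine List.countP_congr fun x hx => ?_
  simp [hlt x hx]

theorem stmt13_general (a : List ℕ)
    (hinc : a.Chain' (· < ·))
    (t : ℕ) (ht1 : 1 ≤ t) (htk : t ≤ (redSeq a).length)
    (j : ℕ) (hj1 : 1 ≤ j) (hjl : j ≤ a.length)
    (hval : a.getD (j - 1) 0 = (redSeq a).getD (t - 1) 0) :
    j = t + (remSet (a.take (j - 1))).card := by
  obtain ⟨i, rfl⟩ : ∃ i, j = i + 1 := ⟨j - 1, by omega⟩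
  obtain ⟨s, rfl⟩ : ∃ s, t = s + 1 := ⟨t - 1, by omega⟩
  have hi : i < a.length := by omega
  have hs : s < (redSeq a).length := by omega
  simp only [Nat.add_sub_cancel, List.getD_eq_getElem _ _ hi, List.getD_eq_getElem _ _ hs]
    at hval ⊢
  have ha : a.Pairwise (· < ·) := hinc.pairwise
  have hkept : a[i] ∉ remSet a := by
    have hmem : a[i] ∈ redSeq a := hval ▸ List.getElem_mem hs
    simpa [redSeq] using (List.mem_filter.mp hmem).2
  have hpos := ha.nodup.eq_length_filter_take _ hi hs hval.symm
  have hsplit := List.length_eq_countP_add_countP (· ∈ remSet a) (l := a.take i)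
  rw [countP_take_mem_remSet ha hi hkept, List.countP_eq_length_filter,
    List.length_take_of_le hi.le] at hsplit
  simp only [decide_not, decide_eq_true_eq] at hpos hsplit
  omega

theorem stmt13 (n : ℕ) (hn : 1 ≤ n) (a : List ℕ)
    (hinc : a.Chain' (· < ·)) (hbd : ∀ x ∈ a, 1 ≤ x ∧ x ≤ 2 * n)
    (hlen : a.length ≤ 2 * n)
    (t : ℕ) (ht1 : 1 ≤ t) (htk : t ≤ (redSeq a).length)
    (j : ℕ) (hj1 : 1 ≤ j) (hjl : j ≤ a.length)
    (hval : a.getD (j - 1) 0 = (redSeq a).getD (t - 1) 0) :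
    j = t + (remSet (a.take (j - 1))).card :=
  stmt13_general a hinc t ht1 htk j hj1 hjl hval
end

section
/- Let n ≥ 1, l ∈ [0,2n], and 𝐚 = (a_1,…,a_l) a strictly increasing sequence of integers in [1,2n]. Then red(𝐚) = 𝐚 if and only if 𝐚 is symplectic, i.e., a_i ≥ 2i − 1 for all i ∈ [1,l]. -/
/-! By induction on the length `l`. Suppose the prefix `(a_1, …, a_{l-1})` is symplectic, so by
induction it has no removable entries. Then the last pair is removed exactly when `a_l` is even,
`a_{l-1} = a_l - 1` and `a_l ≤ 2l - 2`; since `a_{l-1} ≥ 2l - 3` and `a_l > a_{l-1}`, this happens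
precisely when `a_l < 2l - 1`. Hence `Rem(𝐚) = ∅` iff `𝐚` is symplectic, and `red(𝐚) = 𝐚` iff
`Rem(𝐚) = ∅` because `Rem(𝐚) ⊆ 𝐚`. -/

def IsSymplectic (a : List ℕ) : Prop := ∀ i < a.length, 2 * i + 1 ≤ a.getD i 0

theorem isSymplectic_append_singleton {a : List ℕ} {b : ℕ} :
    IsSymplectic (a ++ [b]) ↔ IsSymplectic a ∧ 2 * a.length + 1 ≤ b := by
  simp only [IsSymplectic, List.length_append, List.length_singleton, Nat.lt_succ_iff_lt_or_eq,
    or_imp, forall_and, forall_eq, List.getD_append_right _ _ _ _ le_rfl, Nat.sub_self,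
    List.getD_cons_zero]
  exact and_congr_left' (forall₂_congr fun i hi => by rw [List.getD_append _ _ _ _ hi])

theorem isSymplectic_reverse_cons {r : List ℕ} {b : ℕ} :
    IsSymplectic (b :: r).reverse ↔ IsSymplectic r.reverse ∧ 2 * r.length + 1 ≤ b := by
  rw [List.reverse_cons, isSymplectic_append_singleton, List.length_reverse]

theorem isSymplectic_iff_getD_pred (a : List ℕ) :
    IsSymplectic a ↔ ∀ i, 1 ≤ i → i ≤ a.length → 2 * i - 1 ≤ a.getD (i - 1) 0 := by
  constructor
  · intro h i hi1 hil
    have := h (i - 1) (by omega)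
    omega
  · intro h i hi
    have := h (i + 1) (by omega) (by omega)
    rw [Nat.add_sub_cancel] at this
    omega

theorem remAux_subset (r : List ℕ) : remAux r ⊆ r.toFinset := by
  induction r using remAux.induct with
  | case1 | case2 => simp [remAux]
  | case3 b a rest hc ih =>
    rw [remAux, if_pos hc, List.toFinset_cons, List.toFinset_cons, Finset.insert_comm b a]
    exact Finset.insert_subset_insert _ (Finset.insert_subset_insert _ ih)
  | case4 b a rest hc _ ih =>
    rw [remAux, if_neg hc, List.toFinset_cons (a := b)]
    exact ih.trans (Finset.subset_insert _ _)

theorem redSeq_eq_self_iff (a : List ℕ) : redSeq a = a ↔ remSet a = ∅ := by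
  rw [redSeq, List.filter_eq_self, Finset.eq_empty_iff_forall_notMem]
  refine ⟨fun h x hx => ?_, fun h x _ => by simpa using h x⟩
  simpa [hx] using h x (by simpa using remAux_subset a.reverse hx)

theorem remAux_eq_empty_iff {r : List ℕ} (hr : r.IsChain (· > ·)) (hpos : ∀ x ∈ r, 1 ≤ x) :
    remAux r = ∅ ↔ IsSymplectic r.reverse := by
  induction r using remAux.induct with
  | case1 => simp [remAux, IsSymplectic]
  | case2 b =>
    simpa [remAux, IsSymplectic, Nat.one_le_iff_ne_zero, Nat.pos_iff_ne_zero] using hpos b (by simp)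
  | case3 b a rest hc _ =>
    rw [remAux, if_pos hc, isSymplectic_reverse_cons]
    simp only [Finset.insert_ne_empty, false_iff, not_and, not_le, List.length_cons]
    intro _
    omega
  | case4 b a rest hc ih_rest ih =>
    rw [List.isChain_cons_cons] at hr
    rw [remAux, if_neg hc, ih hr.2 (fun x hx => hpos x (List.mem_cons_of_mem _ hx)),
      isSymplectic_reverse_cons (r := a :: rest)]
    refine ⟨fun h => ⟨h, ?_⟩, And.left⟩
    obtain ⟨hsymp, ha⟩ := isSymplectic_reverse_cons.mp h
    have hcard : (remAux rest).card = 0 := by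
      rw [(ih_rest hr.2.tail (fun x hx => hpos x (by simp [hx]))).mpr hsymp, Finset.card_empty]
    by_contra! hb
    simp only [List.length_cons] at ha hb
    -- otherwise `b = 2 * (rest.length + 1)` and `a = b - 1`, so the pair `a, b` would be removed
    exact hc ⟨⟨rest.length + 1, by omega⟩, by omega, by omega⟩

theorem remSet_eq_empty_iff {a : List ℕ} (hinc : a.IsChain (· < ·)) (hpos : ∀ x ∈ a, 1 ≤ x) :
    remSet a = ∅ ↔ IsSymplectic a := by
  rw [remSet, remAux_eq_empty_iff (List.isChain_reverse.mpr hinc) (by simpa using hpos),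
    List.reverse_reverse]

theorem stmt15_general (n : ℕ) (a : List ℕ)
    (hinc : a.Chain' (· < ·)) (hbd : ∀ x ∈ a, 1 ≤ x ∧ x ≤ 2 * n) :
    redSeq a = a ↔ ∀ i, 1 ≤ i → i ≤ a.length → 2 * i - 1 ≤ a.getD (i - 1) 0 := by
  rw [redSeq_eq_self_iff, remSet_eq_empty_iff hinc (fun x hx => (hbd x hx).1),
    isSymplectic_iff_getD_pred]

theorem stmt15 (n : ℕ) (hn : 1 ≤ n) (a : List ℕ)
    (hinc : a.Chain' (· < ·)) (hbd : ∀ x ∈ a, 1 ≤ x ∧ x ≤ 2 * n)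
    (hlen : a.length ≤ 2 * n) :
    redSeq a = a ↔ ∀ i, 1 ≤ i → i ≤ a.length → 2 * i - 1 ≤ a.getD (i - 1) 0 :=
  stmt15_general n a hinc hbd
end

section
/- Let n ≥ 1 and l ∈ [0,2n]. Then the reduction map 𝐚 ↦ red(𝐚), defined on the set of strictly increasing sequences of length l with entries in [1,2n], is injective. -/
abbrev RCond (b a : ℕ) (rest : List ℕ) : Prop :=
  Even b ∧ a + 1 = b ∧ b + (remAux rest).card + 1 < 2 * (rest.length + 2)

lemma remAux_pos_s16 (b a : ℕ) (rest : List ℕ) (h : RCond b a rest) :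
    remAux (b :: a :: rest) = insert a (insert b (remAux rest)) := by
  rw [remAux, if_pos h]

lemma remAux_neg (b a : ℕ) (rest : List ℕ) (h : ¬ RCond b a rest) :
    remAux (b :: a :: rest) = remAux (a :: rest) := by
  rw [remAux, if_neg h]

lemma remAux_sub : ∀ (L : List ℕ), ∀ x ∈ remAux L, x ∈ L := by
  intro L
  induction L using remAux.induct with
  | case1 => simp [remAux]
  | case2 a => simp [remAux]
  | case3 b a rest h ih =>
    intro x hx
    rw [remAux_pos_s16 _ _ _ h] at hx
    simp only [Finset.mem_insert] at hx
    rcases hx with h1|h1|h1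
    · simp [h1]
    · simp [h1]
    · simp [ih x h1]
  | case4 b a rest h ih1 ih2 =>
    intro x hx
    rw [remAux_neg _ _ _ h] at hx
    have := ih2 x hx
    simp at this ⊢; tauto

lemma card_removed (x y : ℕ) (M : List ℕ) (hp : (x :: y :: M).Pairwise (· > ·)) :
    (insert y (insert x (remAux M))).card = (remAux M).card + 2 := by
  rcases List.pairwise_cons.mp hp with ⟨hx, hp2⟩
  rcases List.pairwise_cons.mp hp2 with ⟨hy, _⟩
  have hxM : x ∉ remAux M := fun h => lt_irrefl x (hx x (by simp [remAux_sub M x h]))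
  have hyM : y ∉ remAux M := fun h => lt_irrefl y (hy y (remAux_sub M y h))
  have hyx : y ≠ x := ne_of_lt (hx y (by simp))
  rw [Finset.card_insert_of_notMem (by simp [hyx, hyM]),
      Finset.card_insert_of_notMem hxM]

lemma remAux_card_even : ∀ (L : List ℕ), L.Pairwise (· > ·) → (remAux L).card % 2 = 0 := by
  intro L
  induction L using remAux.induct with
  | case1 => simp [remAux]
  | case2 a => simp [remAux]
  | case3 b a rest h ih =>
    intro hp
    rw [remAux_pos_s16 _ _ _ h, card_removed _ _ _ hp]
    have := ih (hp.of_cons.of_cons)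
    omega
  | case4 b a rest h ih1 ih2 =>
    intro hp
    rw [remAux_neg _ _ _ h]
    exact ih2 hp.of_cons

lemma card_mono : ∀ (k : ℕ) (L : List ℕ), L.length ≤ k → ∀ x : ℕ, (x :: L).Pairwise (· > ·) →
    (remAux L).card ≤ (remAux (x :: L)).card ∧ (remAux (x :: L)).card ≤ (remAux L).card + 2 := by
  intro k
  induction k with
  | zero =>
    intro L hL x _
    have : L = [] := List.eq_nil_of_length_eq_zero (by omega)
    subst this; simp [remAux]
  | succ k ih =>
    intro L hL x hp
    match L with
    | [] => simp [remAux]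
    | [a] =>
      by_cases h : RCond x a []
      · rw [remAux_pos_s16 _ _ _ h, card_removed _ _ _ hp]
        simp [remAux]
      · rw [remAux_neg _ _ _ h]
        omega
    | a :: c :: rest =>
      by_cases h : RCond x a (c :: rest)
      · rw [remAux_pos_s16 _ _ _ h, card_removed _ _ _ hp]
        have := ih (c :: rest) (by simp at hL ⊢; omega) a hp.of_cons
        omega
      · rw [remAux_neg _ _ _ h]
        omega

lemma invS : ∀ (k : ℕ) (M : List ℕ) (x : ℕ), M.length ≤ k → (x :: M).Pairwise (· > ·) →
    (∀ z ∈ x :: M, 1 ≤ z) → 2 * (M.length + 1) ≤ x + (remAux (x :: M)).card + 1 := by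
  intro k
  induction k with
  | zero =>
    intro M x hL _ hb
    have : M = [] := List.eq_nil_of_length_eq_zero (by omega)
    subst this
    have := hb x (by simp)
    simp [remAux]; omega
  | succ k ih =>
    intro M x hL hp hb
    match M with
    | [] =>
      have := hb x (by simp)
      simp [remAux]; omega
    | y :: M' =>
      by_cases h : RCond x y M'
      · rw [remAux_pos_s16 _ _ _ h, card_removed _ _ _ hp]
        match M' with
        | [] =>
          have hy := hb y (by simp)
          simp [remAux]
          omega
        | z :: M'' =>
          have hz : y > z := (List.pairwise_cons.mp hp.of_cons).1 z (by simp)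
          have hS := ih M'' z (by simp at hL ⊢; omega) hp.of_cons.of_cons
            (fun w hw => hb w (by simp at hw ⊢; tauto))
          have hmono := card_mono M''.length M'' le_rfl z hp.of_cons.of_cons
          obtain ⟨_, hyx, _⟩ := h
          simp only [List.length_cons] at *
          omega
      · rw [remAux_neg _ _ _ h]
        have hS := ih M' y (by simp at hL ⊢; omega) hp.of_cons
          (fun w hw => hb w (by simp at hw ⊢; tauto))
        have hxy : x > y := (List.pairwise_cons.mp hp).1 y (by simp)
        rcases Nat.lt_or_ge (y + 1) x with hgt | hle
        · simp only [List.length_cons] at *; omega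
        · -- x = y + 1
          have hxeq : x = y + 1 := by omega
          by_cases hev : Even x
          · have h3 : ¬ (x + (remAux M').card + 1 < 2 * (M'.length + 2)) := by
              intro h3; exact h (⟨hev, by omega, h3⟩)
            have hmono := card_mono M'.length M' le_rfl y hp.of_cons
            simp only [List.length_cons] at *
            omega
          · -- x odd, y even
            have hyev : y % 2 = 0 := by
              rw [Nat.even_iff] at hev; omega
            have hre := remAux_card_even (y :: M') hp.of_cons
            simp only [List.length_cons] at *
            omega

def redAux (L : List ℕ) : List ℕ := L.filter (fun x => decide (x ∉ remAux L))

lemma redAux_single (x : ℕ) : redAux [x] = [x] := by simp [redAux, remAux]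

lemma redAux_pos (x y : ℕ) (M : List ℕ) (hp : (x :: y :: M).Pairwise (· > ·))
    (h : RCond x y M) : redAux (x :: y :: M) = redAux M := by
  rcases List.pairwise_cons.mp hp with ⟨hx, hp2⟩
  rcases List.pairwise_cons.mp hp2 with ⟨hy, _⟩
  unfold redAux
  rw [List.filter_cons, List.filter_cons]
  have e := remAux_pos_s16 _ _ _ h
  rw [e]
  simp only [Finset.mem_insert, not_true, decide_eq_true_eq]
  have h1 : ¬ (x ∉ insert y (insert x (remAux M))) := by simp
  have h2 : ¬ (y ∉ insert y (insert x (remAux M))) := by simp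
  rw [if_neg (by simpa using h1), if_neg (by simpa using h2)]
  apply List.filter_congr
  intro z hz
  have hz1 : z ≠ x := ne_of_lt (hx z (by simp [hz]))
  have hz2 : z ≠ y := ne_of_lt (hy z hz)
  simp [hz1, hz2]

lemma redAux_neg (x y : ℕ) (M : List ℕ) (hp : (x :: y :: M).Pairwise (· > ·))
    (h : ¬ RCond x y M) : redAux (x :: y :: M) = x :: redAux (y :: M) := by
  rcases List.pairwise_cons.mp hp with ⟨hx, _⟩
  unfold redAux
  rw [List.filter_cons]
  have e := remAux_neg _ _ _ h
  rw [e]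
  have hxm : x ∉ remAux (y :: M) := fun hm => lt_irrefl x (hx x (remAux_sub _ x hm))
  rw [if_pos (by simpa using hxm)]

lemma redAux_len : ∀ (L : List ℕ), L.Pairwise (· > ·) →
    (redAux L).length + (remAux L).card = L.length := by
  intro L
  induction L using remAux.induct with
  | case1 => simp [redAux, remAux]
  | case2 a => simp [redAux_single, remAux]
  | case3 b a rest h ih =>
    intro hp
    rw [redAux_pos _ _ _ hp h, remAux_pos_s16 _ _ _ h, card_removed _ _ _ hp]
    have := ih hp.of_cons.of_cons
    simp only [List.length_cons]
    omega
  | case4 b a rest h ih1 ih2 =>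
    intro hp
    rw [redAux_neg _ _ _ hp h, remAux_neg _ _ _ h]
    have := ih2 hp.of_cons
    simp only [List.length_cons] at this ⊢
    omega

lemma pair_determined (x y : ℕ) (M : List ℕ) (hp : (x :: y :: M).Pairwise (· > ·))
    (hb : ∀ z ∈ x :: y :: M, 1 ≤ z) (h : RCond x y M) :
    x = 2 * M.length + 2 - (remAux M).card ∧ y = 2 * M.length + 1 - (remAux M).card := by
  obtain ⟨hev, hxy, hlt⟩ := h
  rw [Nat.even_iff] at hev
  have hre := remAux_card_even M hp.of_cons.of_cons
  match M with
  | [] =>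
    have := hb y (by simp)
    simp [remAux] at *
    omega
  | z :: M' =>
    have hS := invS M'.length M' z le_rfl hp.of_cons.of_cons
      (fun w hw => hb w (by simp at hw ⊢; tauto))
    have hz : y > z := (List.pairwise_cons.mp hp.of_cons).1 z (by simp)
    simp only [List.length_cons] at *
    omega

lemma mixed_false (x y u v : ℕ) (M N : List ℕ)
    (hpA : (x :: y :: M).Pairwise (· > ·)) (hpB : (u :: v :: N).Pairwise (· > ·))
    (hbB : ∀ z ∈ u :: v :: N, 1 ≤ z)
    (ca : RCond x y M) (cb : ¬ RCond u v N)
    (hlen : M.length = N.length)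
    (hred : redAux (x :: y :: M) = redAux (u :: v :: N)) : False := by
  rw [redAux_pos _ _ _ hpA ca, redAux_neg _ _ _ hpB cb] at hred
  have huM : u ∈ redAux M := by rw [hred]; simp
  have hu : u ∈ M := List.mem_of_mem_filter huM
  have lA := redAux_len M hpA.of_cons.of_cons
  have lB := redAux_len (v :: N) hpB.of_cons
  have hS := invS (v :: N).length (v :: N) u le_rfl hpB hbB
  rw [remAux_neg _ _ _ cb] at hS
  have hyu : y > u := (List.pairwise_cons.mp hpA.of_cons).1 u hu
  have hxy : x > y := (List.pairwise_cons.mp hpA).1 y (by simp)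
  obtain ⟨_, hyx, hlt⟩ := ca
  have hlenred := congrArg List.length hred
  simp only [List.length_cons] at *
  omega

lemma key : ∀ (k : ℕ) (La Lb : List ℕ), La.length ≤ k →
    La.Pairwise (· > ·) → Lb.Pairwise (· > ·) →
    (∀ z ∈ La, 1 ≤ z) → (∀ z ∈ Lb, 1 ≤ z) →
    La.length = Lb.length → redAux La = redAux Lb → La = Lb := by
  intro k
  induction k with
  | zero =>
    intro La Lb hL _ _ _ _ hlen _
    have hA : La = [] := List.eq_nil_of_length_eq_zero (by omega)
    have hB : Lb = [] := List.eq_nil_of_length_eq_zero (by omega)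
    rw [hA, hB]
  | succ k ih =>
    intro La Lb hL hpA hpB hbA hbB hlen hred
    match La with
    | [] =>
      have hB : Lb = [] := List.eq_nil_of_length_eq_zero (by simp at hlen; omega)
      rw [hB]
    | [x] =>
      obtain ⟨u, hB⟩ := List.length_eq_one_iff.mp (show Lb.length = 1 by simp at hlen; omega)
      subst hB
      rw [redAux_single, redAux_single] at hred
      exact hred
    | x :: y :: M =>
      match Lb with
      | [] => simp at hlen
      | [u] => simp at hlen
      | u :: v :: N =>
        have hlen' : M.length = N.length := by simp at hlen; omega
        by_cases ca : RCond x y M <;> by_cases cb : RCond u v N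
        · -- both removed
          rw [redAux_pos _ _ _ hpA ca, redAux_pos _ _ _ hpB cb] at hred
          have hMN : M = N := by
            apply ih M N (by simp at hL; omega) hpA.of_cons.of_cons hpB.of_cons.of_cons
              (fun z hz => hbA z (by simp [hz])) (fun z hz => hbB z (by simp [hz])) hlen' hred
          subst hMN
          obtain ⟨hx1, hy1⟩ := pair_determined x y M hpA hbA ca
          obtain ⟨hx2, hy2⟩ := pair_determined u v M hpB hbB cb
          rw [hx1, hy1, hx2, hy2]
        · exact absurd (mixed_false x y u v M N hpA hpB hbB ca cb hlen' hred) id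
        · exact absurd (mixed_false u v x y N M hpB hpA hbA cb ca hlen'.symm hred.symm) id
        · -- both kept
          rw [redAux_neg _ _ _ hpA ca, redAux_neg _ _ _ hpB cb] at hred
          have hx : x = u := by injection hred
          have htail : redAux (y :: M) = redAux (v :: N) := by injection hred
          have := ih (y :: M) (v :: N) (by simp at hL ⊢; omega) hpA.of_cons hpB.of_cons
            (fun z hz => hbA z (by simp at hz ⊢; tauto)) (fun z hz => hbB z (by simp at hz ⊢; tauto))
            (by simp [hlen']) htail
          rw [hx, this]


lemma redAux_reverse (a : List ℕ) : redAux a.reverse = (redSeq a).reverse := by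
  rw [redAux, redSeq, remSet, List.filter_reverse]

theorem stmt16 (n : ℕ) (hn : 1 ≤ n) (l : ℕ) (hl : l ≤ 2 * n)
    (a b : List ℕ)
    (hainc : a.Chain' (· < ·)) (habd : ∀ x ∈ a, 1 ≤ x ∧ x ≤ 2 * n)
    (hal : a.length = l)
    (hbinc : b.Chain' (· < ·)) (hbbd : ∀ x ∈ b, 1 ≤ x ∧ x ≤ 2 * n)
    (hbl : b.length = l)
    (h : redSeq a = redSeq b) : a = b := by
  have hpA : a.reverse.Pairwise (· > ·) := by
    rw [List.pairwise_reverse]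
    exact (List.isChain_iff_pairwise (R := (· < ·))).mp hainc
  have hpB : b.reverse.Pairwise (· > ·) := by
    rw [List.pairwise_reverse]
    exact (List.isChain_iff_pairwise (R := (· < ·))).mp hbinc
  have := key a.reverse.length a.reverse b.reverse le_rfl hpA hpB
    (fun z hz => (habd z (List.mem_reverse.mp hz)).1)
    (fun z hz => (hbbd z (List.mem_reverse.mp hz)).1)
    (by simp [hal, hbl])
    (by rw [redAux_reverse, redAux_reverse, h])
  exact List.reverse_injective this
end
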